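/- Let f, g be weighted homogeneous polynomials on ℂ^m with respect to a strictly positive weight vector P, of degrees d_f and d_g, and let b ∈ ℂ^{*m} with f(b) ≠ 0 and g(b) ≠ 0. Suppose there exists λ₀ ∈ ℂ with |λ₀| = 1 such that g(b)·conj(∂f/∂zⱼ(b)) = λ₀·f(b)·conj(∂g/∂zⱼ(b)) for all j = 1,…,m. Then d_f = d_g. -/

import Mathlib

open MvPolynomial


lemma euler_deriv {m : ℕ} (p : Fin m → ℕ) (b : Fin m → ℂ) (f : MvPolynomial (Fin m) ℂ) :
    HasDerivAt (fun t : ℂ => eval (fun j => t ^ p j * b j) f)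
      (∑ j, eval b (pderiv j f) * ((p j : ℂ) * b j)) 1 := by
  induction f using MvPolynomial.induction_on with
  | C a => simpa using hasDerivAt_const (1:ℂ) a
  | add f g hf hg =>
      simpa [add_mul, Finset.sum_add_distrib] using hf.fun_add hg
  | mul_X f n hf =>
      have h1 : HasDerivAt (fun t : ℂ => t ^ p n * b n) ((p n : ℂ) * b n) 1 := by
        simpa using (hasDerivAt_pow (p n) 1).mul_const (b n)
      have h2 := hf.mul h1
      have hfun : (fun t : ℂ => eval (fun j => t ^ p j * b j) (f * X n))
          = fun t : ℂ => eval (fun j => t ^ p j * b j) f * (t ^ p n * b n) := by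
        funext t; simp
      rw [hfun]
      refine h2.congr_deriv ?_
      symm
      simp only [Derivation.leibniz, pderiv_X, smul_eq_mul, map_add, map_mul, eval_X, one_pow,
        one_mul, add_mul]
      rw [Finset.sum_add_distrib, add_comm]
      congr 1
      · rw [Finset.sum_mul]
        exact Finset.sum_congr rfl fun i _ => by ring
      · rw [Finset.sum_eq_single n]
        · simp
        · intro i _ hin; simp [Pi.single_apply, hin]
        · simp

lemma euler_id {m : ℕ} (p : Fin m → ℕ) (b : Fin m → ℂ) (f : MvPolynomial (Fin m) ℂ) (d : ℕ)
    (hf : ∀ t : ℂ, t ≠ 0 → ∀ z : Fin m → ℂ,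
      eval (fun j => t ^ p j * z j) f = t ^ d * eval z f) :
    ∑ j, eval b (pderiv j f) * ((p j : ℂ) * b j) = (d : ℂ) * eval b f := by
  have hev : (fun t : ℂ => eval (fun j => t ^ p j * b j) f)
      =ᶠ[nhds 1] fun t : ℂ => t ^ d * eval b f := by
    filter_upwards [eventually_ne_nhds one_ne_zero] with t ht using hf t ht b
  have h2 : HasDerivAt (fun t : ℂ => t ^ d * eval b f) ((d : ℂ) * eval b f) 1 := by
    simpa using (hasDerivAt_pow d (1 : ℂ)).mul_const (eval b f)
  exact (euler_deriv p b f).unique (h2.congr_of_eventuallyEq hev)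

/-- If `f, g` are weighted homogeneous of degrees `d_f`, `d_g` w.r.t. a strictly
positive weight `P`, `b` has all coordinates nonzero with `f(b) ≠ 0 ≠ g(b)`, and
`g(b)·conj(∂f/∂zⱼ(b)) = λ₀·f(b)·conj(∂g/∂zⱼ(b))` for all `j` with `|λ₀| = 1`,
then `d_f = d_g`. -/
theorem stmt9 {m : ℕ} (f g : MvPolynomial (Fin m) ℂ) (p : Fin m → ℕ) (hp : ∀ j, 0 < p j)
    (df dg : ℕ) (hdf : 0 < df) (hdg : 0 < dg)
    (hf : ∀ t : ℂ, t ≠ 0 → ∀ z : Fin m → ℂ,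
      eval (fun j => t ^ p j * z j) f = t ^ df * eval z f)
    (hg : ∀ t : ℂ, t ≠ 0 → ∀ z : Fin m → ℂ,
      eval (fun j => t ^ p j * z j) g = t ^ dg * eval z g)
    (b : Fin m → ℂ) (hb : ∀ j, b j ≠ 0)
    (hfb : eval b f ≠ 0) (hgb : eval b g ≠ 0)
    (lam : ℂ) (hlam : ‖lam‖ = 1)
    (heq : ∀ j : Fin m,
      eval b g * (starRingEnd ℂ) (eval b (pderiv j f))
        = lam * (eval b f * (starRingEnd ℂ) (eval b (pderiv j g)))) :
    df = dg := by
  have hEf := congrArg (starRingEnd ℂ) (euler_id p b f df hf)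
  have hEg := congrArg (starRingEnd ℂ) (euler_id p b g dg hg)
  simp only [map_sum, map_mul, map_natCast] at hEf hEg
  have key : eval b g * ((df : ℂ) * (starRingEnd ℂ) (eval b f))
      = lam * (eval b f * ((dg : ℂ) * (starRingEnd ℂ) (eval b g))) := by
    have h1 : eval b g * ((df : ℂ) * (starRingEnd ℂ) (eval b f))
        = ∑ j, (eval b g * (starRingEnd ℂ) (eval b (pderiv j f)))
            * ((p j : ℂ) * (starRingEnd ℂ) (b j)) := by
      rw [← hEf, Finset.mul_sum]; exact Finset.sum_congr rfl fun j _ => by ring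
    have h2 : lam * (eval b f * ((dg : ℂ) * (starRingEnd ℂ) (eval b g)))
        = ∑ j, (lam * (eval b f * (starRingEnd ℂ) (eval b (pderiv j g))))
            * ((p j : ℂ) * (starRingEnd ℂ) (b j)) := by
      rw [← hEg, Finset.mul_sum, Finset.mul_sum]; exact Finset.sum_congr rfl fun j _ => by ring
    rw [h1, h2]
    exact Finset.sum_congr rfl fun j _ => by rw [heq j]
  have habs := congrArg (fun z : ℂ => ‖z‖) key
  simp only [norm_mul, Complex.norm_natCast, Complex.norm_conj, hlam, one_mul] at habs
  have hfpos : 0 < ‖eval b f‖ := norm_pos_iff.mpr hfb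
  have hgpos : 0 < ‖eval b g‖ := norm_pos_iff.mpr hgb
  have : (df : ℝ) = dg := by nlinarith [habs, mul_pos hfpos hgpos]
  exact_mod_cast this
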